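/- Every palindromic factor of the doubling sequence D∞ of even positive length equals the word aa; equivalently, every palindromic factor of D∞ other than aa has odd length. -/

import Mathlib

namespace PD

/-- The period-doubling substitution on the alphabet `Bool`,
where `false` stands for the letter `a` and `true` for the letter `b`:
`σ(a) = ab`, `σ(b) = aa`. -/
def sub : Bool → List Bool
  | false => [false, true]
  | true  => [false, false]

/-- The substitution applied to a finite word. -/
def subW (w : List Bool) : List Bool := w.flatMap sub

/-- `A m = σ^m(a)`. -/
def A (m : ℕ) : List Bool := subW^[m] [false]

/-- `B m = σ^m(b)`. -/
def B (m : ℕ) : List Bool := subW^[m] [true]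

/-- The doubling sequence `D∞` (0-indexed: `D n` is the `(n+1)`-th letter),
the fixed point of `σ` beginning with `a`; `A m` is a prefix of `A (m+1)`,
and `A (n+1)` has length `2^(n+1) > n`. -/
def D (n : ℕ) : Bool := (A (n + 1)).getD n false

/-- `δ m`, the last letter of `A m`. -/
def delta (m : ℕ) : Bool := (A m).getLastD false

/-- The envelope words (`i ∈ {1,2}`): `E m 1 = A m` minus its last letter,
`E m 2 = A (m-1) ++ (A m` minus its last letter `)`. -/
def E (m i : ℕ) : List Bool :=
  if i = 1 then (A m).dropLast else A (m - 1) ++ (A m).dropLast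

/-- `w` occurs at the (1-indexed) position `j` in the finite word `τ`. -/
def OccursIn (w τ : List Bool) (j : ℕ) : Prop :=
  1 ≤ j ∧ (τ.drop (j - 1)).take w.length = w

/-- `w` occurs at the (1-indexed) position `j` in the doubling sequence. -/
def OccursD (w : List Bool) (j : ℕ) : Prop :=
  1 ≤ j ∧ ∀ k < w.length, D (j - 1 + k) = w.getD k false

/-- `w` is a factor of the doubling sequence. -/
def FactorD (w : List Bool) : Prop := ∃ j, OccursD w j

/-- `L w p`: the (1-indexed) starting position of the `p`-th occurrence of `w`
in the doubling sequence, occurrences being ordered by starting position.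
(Each factor occurs infinitely often, so `Nat.nth` enumerates all occurrences
in increasing order.) -/
noncomputable def L (w : List Bool) (p : ℕ) : ℕ := Nat.nth (OccursD w) (p - 1)

/-- The strict total order on envelope words:
`E m₁ i₁ ⊏ E m₂ i₂` iff `m₁ < m₂`, or `m₁ = m₂` and `i₁ < i₂`. -/
def EnvLt (m₁ i₁ m₂ i₂ : ℕ) : Prop := m₁ < m₂ ∨ (m₁ = m₂ ∧ i₁ < i₂)

/-- `Env(w) = E m i`: the envelope word `E m i` is the `⊏`-minimal envelope
word containing `w` as a factor. -/
def IsEnv (w : List Bool) (m i : ℕ) : Prop :=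
  1 ≤ m ∧ (i = 1 ∨ i = 2) ∧ w <:+: E m i ∧
    ∀ m' i', 1 ≤ m' → (i' = 1 ∨ i' = 2) → EnvLt m' i' m i → ¬ w <:+: E m' i'

/-- The substitution `φ₁(a) = a`, `φ₁(b) = bb`. -/
def phi1 : Bool → List Bool
  | false => [false]
  | true  => [true, true]

/-- `Θ₁ = φ₁(D∞)` (0-indexed): `φ₁(A (n+1))` is a prefix of `Θ₁` of length `> n`. -/
def Theta1 (n : ℕ) : Bool := ((A (n + 1)).flatMap phi1).getD n false

/-- The substitution `φ₂(a) = ab`, `φ₂(b) = acac`, over the alphabet `Fin 3`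
where `0` stands for `a`, `1` for `b` and `2` for `c`. -/
def phi2 : Bool → List (Fin 3)
  | false => [0, 1]
  | true  => [0, 2, 0, 2]

/-- `Θ₂ = φ₂(D∞)` (0-indexed). -/
def Theta2 (n : ℕ) : Fin 3 := ((A (n + 1)).flatMap phi2).getD n 0

/-- `N₁(x,p)`: the number of letters `x` among the first `p` letters of `Θ₁`. -/
def N1 (x : Bool) (p : ℕ) : ℕ := ((List.range p).map Theta1).count x

/-- `N₂(x,p)`: the number of letters `x` among the first `p` letters of `Θ₂`. -/
def N2 (x : Fin 3) (p : ℕ) : ℕ := ((List.range p).map Theta2).count x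

end PD

/-!
Reading `σ(a) = ab`, `σ(b) = aa` off the fixed point gives `D (2k) = a` and `D (2k+1) = ¬ D k`.
Hence `bb` is not a factor, so the two central letters of an even palindromic factor, being equal,
are both `a`. A longer even palindrome would contain a factor `xaax`, and the two recurrences rule
out both `aaaa` and `baab`: in each case they force `bb`.
-/

theorem List.IsPrefix.getD_eq {α : Type*} {u v : List α} (h : u <+: v) {n : ℕ}
    (hn : n < u.length) (d : α) : u.getD n d = v.getD n d := by
  rw [List.getD_eq_getElem _ _ hn, List.getD_eq_getElem _ _ (hn.trans_le h.length_le),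
    h.getElem hn]

namespace PD

lemma subW_cons (x : Bool) (w : List Bool) : subW (x :: w) = false :: (!x) :: subW w := by
  cases x <;> simp [subW, sub]

lemma length_subW (w : List Bool) : (subW w).length = 2 * w.length := by
  induction w with
  | nil => rfl
  | cons x w ih => rw [subW_cons, List.length_cons, List.length_cons, ih, List.length_cons]; ring

lemma getD_subW_two_mul (w : List Bool) (k : ℕ) : (subW w).getD (2 * k) false = false := by
  induction w generalizing k with
  | nil => simp [subW]
  | cons x w ih =>
    cases k with
    | zero => simp [subW_cons]
    | succ k => rw [subW_cons, Nat.mul_succ, List.getD_cons_succ, List.getD_cons_succ, ih]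

lemma getD_subW_two_mul_add_one {w : List Bool} {k : ℕ} (hk : k < w.length) :
    (subW w).getD (2 * k + 1) false = !w.getD k false := by
  induction w generalizing k with
  | nil => simp at hk
  | cons x w ih =>
    cases k with
    | zero => simp [subW_cons]
    | succ k =>
      rw [subW_cons, Nat.mul_succ, List.getD_cons_succ, List.getD_cons_succ,
        List.getD_cons_succ, ih (by simpa using hk)]

lemma subW_prefix_subW {u v : List Bool} (h : u <+: v) : subW u <+: subW v := by
  obtain ⟨t, rfl⟩ := h
  simp [subW]

lemma A_succ (m : ℕ) : A (m + 1) = subW (A m) :=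
  Function.iterate_succ_apply' subW m [false]

lemma length_A (m : ℕ) : (A m).length = 2 ^ m := by
  induction m with
  | zero => rfl
  | succ m ih => rw [A_succ, length_subW, ih, pow_succ, mul_comm]

lemma A_prefix_A_succ (m : ℕ) : A m <+: A (m + 1) := by
  induction m with
  | zero => exact ⟨[true], rfl⟩
  | succ m ih => simpa only [A_succ] using subW_prefix_subW ih

lemma A_prefix_A {m M : ℕ} (h : m ≤ M) : A m <+: A M := by
  induction h with
  | refl => exact List.prefix_rfl
  | step _ ih => exact ih.trans (A_prefix_A_succ _)

lemma getD_A_eq_D {m n : ℕ} (hn : n < 2 ^ m) : (A m).getD n false = D n := by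
  have hn' : n < (A (n + 1)).length := by
    rw [length_A]; exact n.lt_two_pow_self.trans (Nat.pow_lt_pow_succ one_lt_two)
  rw [D, (A_prefix_A (le_max_left m (n + 1))).getD_eq (by rwa [length_A]),
    (A_prefix_A (le_max_right m (n + 1))).getD_eq hn']

lemma D_two_mul (k : ℕ) : D (2 * k) = false := by
  have hk : 2 * k < 2 ^ (k + 1) := by have := k.lt_two_pow_self; rw [pow_succ]; omega
  rw [← getD_A_eq_D hk, A_succ, getD_subW_two_mul]

lemma D_two_mul_add_one (k : ℕ) : D (2 * k + 1) = !D k := by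
  have hk : k < 2 ^ k := k.lt_two_pow_self
  have hk' : 2 * k + 1 < 2 ^ (k + 1) := by rw [pow_succ]; omega
  rw [← getD_A_eq_D hk', A_succ, getD_subW_two_mul_add_one (by rwa [length_A]),
    getD_A_eq_D hk]

lemma D_eq_false_or_D_succ_eq_false (k : ℕ) : D k = false ∨ D (k + 1) = false := by
  rcases Nat.even_or_odd' k with ⟨j, rfl | rfl⟩
  · exact .inl (D_two_mul j)
  · exact .inr (D_two_mul (j + 1))

lemma D_eq_false_of_D_eq_D_succ {k : ℕ} (h : D k = D (k + 1)) : D k = false := by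
  rcases D_eq_false_or_D_succ_eq_false k with h' | h'
  exacts [h', h ▸ h']

lemma D_ne_D_add_three {n : ℕ} (h1 : D (n + 1) = false) (h2 : D (n + 2) = false) :
    D n ≠ D (n + 3) := by
  intro h
  obtain ⟨j, rfl | rfl⟩ := Nat.even_or_odd' n
  · rw [D_two_mul_add_one, Bool.not_eq_false'] at h1
    rw [D_two_mul, show 2 * j + 3 = 2 * (j + 1) + 1 by ring, D_two_mul_add_one,
      eq_comm, Bool.not_eq_false'] at h
    rcases D_eq_false_or_D_succ_eq_false j with h' | h' <;> simp [h'] at h1 h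
  · rw [D_two_mul_add_one, show 2 * j + 1 + 3 = 2 * (j + 2) by ring, D_two_mul,
      Bool.not_eq_false'] at h
    rw [show 2 * j + 1 + 2 = 2 * (j + 1) + 1 by ring, D_two_mul_add_one,
      Bool.not_eq_false'] at h2
    rcases D_eq_false_or_D_succ_eq_false j with h' | h' <;> simp [h'] at h h2

lemma D_eq_D_of_palindrome {w : List Bool} {j : ℕ} (hocc : OccursD w j) (hpal : w.Palindrome)
    {k k' : ℕ} (hkk' : k + k' + 1 = w.length) : D (j - 1 + k) = D (j - 1 + k') := by
  obtain rfl : k' = w.length - 1 - k := by omega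
  rw [hocc.2 k (by omega), hocc.2 _ (by omega), ← List.getD_reverse _ (by omega),
    hpal.reverse_eq]

end PD

open PD

/-- Every palindromic factor of the doubling sequence of even positive length
equals the word `aa`; equivalently, every palindromic factor other than `aa`
has odd length. -/
theorem doubling_palindrome_odd (w : List Bool) (hfac : FactorD w)
    (hpal : List.Palindrome w) (heven : Even w.length) (hpos : 0 < w.length) :
    w = [false, false] := by
  obtain ⟨j, hocc⟩ := hfac
  obtain ⟨t, ht⟩ : ∃ t, w.length = 2 * t + 2 :=
    ⟨w.length / 2 - 1, by obtain ⟨l, hl⟩ := heven; omega⟩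
  have hcentre : D (j - 1 + t) = D (j - 1 + (t + 1)) :=
    D_eq_D_of_palindrome hocc hpal (by omega)
  have hcentre_left : D (j - 1 + t) = false := D_eq_false_of_D_eq_D_succ hcentre
  have hcentre_right : D (j - 1 + (t + 1)) = false := hcentre ▸ hcentre_left
  cases t with
  | zero =>
    obtain ⟨x, y, rfl⟩ := List.length_eq_two.mp ht
    have hx := hocc.2 0 (by simp)
    have hy := hocc.2 1 (by simp)
    simp_all
  | succ s =>
    exact absurd (D_eq_D_of_palindrome hocc hpal (k := s) (k' := s + 3) (by omega))
      (D_ne_D_add_three hcentre_left hcentre_right)
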